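/- arXiv:0909.4417 — 2 statements merged into one kernel-verified Lean document; each statement's English description precedes it below -/
import Mathlib

section
/- The Hankel determinant of the r-Bell numbers is independent of r: for every n and r, \det(B_{i+j,r})_{i,j=0}^{n} = \prod_{i=0}^{n} i!. -/
/-- `rS r n k` is the r-Stirling number of the second kind `S_r(n+r, k+r)`. -/
def rS (r : ℕ) : ℕ → ℕ → ℕ
  | 0, 0 => 1
  | 0, _ + 1 => 0
  | n + 1, 0 => r * rS r n 0
  | n + 1, k + 1 => (k + 1 + r) * rS r n (k + 1) + rS r n k

/-- The r-Stirling number of the second kind `S_r(n,k)`. -/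
def rStirling (r n k : ℕ) : ℕ :=
  if r ≤ n ∧ r ≤ k then rS r (n - r) (k - r) else 0

/-- The r-Bell polynomial `B_{n,r}(x)` as a real function. -/
def rBellPoly (r n : ℕ) (x : ℝ) : ℝ :=
  ∑ k ∈ Finset.range (n + 1), (rS r n k : ℝ) * x ^ k

/-- The r-Bell number `B_{n,r}`. -/
def rBell (r n : ℕ) : ℕ :=
  ∑ k ∈ Finset.range (n + 1), rS r n k

/-
`B_{n,r}` is the moment `φ((x + r)^n)` of the Poisson functional `φ(x^{\underline j}) = 1`.
In the basis of monic Charlier polynomials, which are `φ`-orthogonal with squared norms `k!`,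
multiplication by `x + r` is the tridiagonal operator `J = jacobi (k ↦ k + 1 + r)`, and it is
self-adjoint for the weights `k!`. Hence the coordinate vectors `c n = J^n e₀` of `(x + r)^n`
satisfy `B_{m+n,r} = ∑ k! c_m(k) c_n(k)`, i.e. the Hankel matrix is `L D Lᵀ` with `L`
unitriangular and `D = diag(k!)`. The coordinates are `c n k = ∑ⱼ S_r(n+r, j+r) binom(j, k)`,
because the vectors `binom(j, ·)` transform under `J` as `x^{\underline j}` does under
multiplication by `x + r`.
-/

open Finset
open scoped Nat

theorem rS_eq_zero_of_lt {r n k : ℕ} (h : n < k) : rS r n k = 0 := by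
  induction n generalizing k with
  | zero => obtain ⟨k, rfl⟩ := Nat.exists_eq_add_one_of_ne_zero h.ne'; rfl
  | succ n ih =>
    obtain ⟨k, rfl⟩ := Nat.exists_eq_add_one_of_ne_zero (by omega : k ≠ 0)
    simp only [rS, ih (by omega : n < k), ih (by omega : n < k + 1), mul_zero]

theorem sum_rS_nsmul_eq_iterate {M : Type*} [AddCommMonoid M] (r : ℕ) (T : M →+ M)
    (e : ℕ → M) (hT : ∀ j, T (e j) = e (j + 1) + (j + r) • e j) (n : ℕ) :
    ∑ j ∈ range (n + 1), rS r n j • e j = T^[n] (e 0) := by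
  induction n with
  | zero => simp [rS]
  | succ n ih =>
    have diagonal_part : ∑ j ∈ range (n + 1), rS r n j • (j + r) • e j =
        ∑ j ∈ range (n + 1), ((j + 1 + r) * rS r n (j + 1)) • e (j + 1) +
          (r * rS r n 0) • e 0 := by
      have shift := sum_range_succ' (fun j => ((j + r) * rS r n j) • e j) (n + 1)
      rw [zero_add] at shift
      rw [← shift, sum_range_succ _ (n + 1),
        rS_eq_zero_of_lt (Nat.lt_succ_self n), mul_zero, zero_smul, add_zero]
      exact sum_congr rfl fun j _ => by rw [smul_smul, mul_comm]
    rw [Function.iterate_succ_apply', ← ih, map_sum]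
    simp only [map_nsmul, hT, smul_add, sum_add_distrib, diagonal_part]
    rw [sum_range_succ']
    simp only [rS, add_smul, sum_add_distrib]
    abel

section Jacobi

variable {R : Type*} [CommRing R] (b : ℕ → R)

def jacobi : (ℕ → R) →ₗ[R] (ℕ → R) where
  toFun u
    | 0 => b 0 * u 0 + u 1
    | k + 1 => u k + b (k + 1) * u (k + 1) + (k + 2) * u (k + 2)
  map_add' u v := by
    funext k
    cases k <;> simp only [Pi.add_apply] <;> ring
  map_smul' a u := by
    funext k
    cases k <;> simp only [Pi.smul_apply, smul_eq_mul, RingHom.id_apply] <;> ring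

@[simp]
theorem jacobi_apply_zero (u : ℕ → R) : jacobi b u 0 = b 0 * u 0 + u 1 := rfl

@[simp]
theorem jacobi_apply_succ (u : ℕ → R) (k : ℕ) :
    jacobi b u (k + 1) = u k + b (k + 1) * u (k + 1) + (k + 2) * u (k + 2) := rfl

theorem sum_factorial_mul_jacobi_sub (u v : ℕ → R) (N : ℕ) :
    ∑ k ∈ range (N + 1), (k ! : R) * (jacobi b u k * v k - u k * jacobi b v k) =
      ((N + 1)! : R) * (u (N + 1) * v N - u N * v (N + 1)) := by
  induction N with
  | zero =>
    simp only [zero_add, sum_range_one, Nat.factorial_zero, Nat.factorial_one, Nat.cast_one,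
      one_mul, jacobi_apply_zero]
    ring
  | succ N ih =>
    rw [sum_range_succ, ih, jacobi_apply_succ, jacobi_apply_succ, Nat.factorial_succ (N + 1)]
    push_cast
    ring

def jacobiCoeff (n : ℕ) : ℕ → R := (jacobi b)^[n] (Pi.single 0 1)

theorem jacobiCoeff_succ (n : ℕ) : jacobiCoeff b (n + 1) = jacobi b (jacobiCoeff b n) :=
  Function.iterate_succ_apply' _ _ _

theorem jacobiCoeff_eq_zero_of_lt {n k : ℕ} (h : n < k) : jacobiCoeff b n k = 0 := by
  induction n generalizing k with
  | zero => simp [jacobiCoeff, h.ne']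
  | succ n ih =>
    obtain ⟨k, rfl⟩ := Nat.exists_eq_add_one_of_ne_zero (by omega : k ≠ 0)
    simp [jacobiCoeff_succ, ih (by omega : n < k), ih (by omega : n < k + 1),
      ih (by omega : n < k + 2)]

theorem jacobiCoeff_self (n : ℕ) : jacobiCoeff b n n = 1 := by
  induction n with
  | zero => simp [jacobiCoeff]
  | succ n ih =>
    simp [jacobiCoeff_succ, ih, jacobiCoeff_eq_zero_of_lt b (by omega : n < n + 1),
      jacobiCoeff_eq_zero_of_lt b (by omega : n < n + 2)]

theorem sum_factorial_mul_jacobiCoeff_of_add_lt {m n N : ℕ} (h : m + n < N) :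
    ∑ k ∈ range N, (k ! : R) * (jacobiCoeff b m k * jacobiCoeff b n k) =
      jacobiCoeff b (m + n) 0 := by
  induction m generalizing n with
  | zero =>
    rw [sum_eq_single_of_mem 0 (mem_range.mpr (by omega)) fun k _ hk => by
      simp [jacobiCoeff, hk]]
    simp [jacobiCoeff]
  | succ m ih =>
    obtain ⟨N, rfl⟩ := Nat.exists_eq_add_one_of_ne_zero (by omega : N ≠ 0)
    have green := sum_factorial_mul_jacobi_sub b (jacobiCoeff b m) (jacobiCoeff b n) N
    rw [jacobiCoeff_eq_zero_of_lt b (by omega : m < N + 1),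
      jacobiCoeff_eq_zero_of_lt b (by omega : n < N + 1), zero_mul, mul_zero, sub_zero,
      mul_zero] at green
    set u := jacobiCoeff b m
    set v := jacobiCoeff b n
    have self_adjoint : ∑ k ∈ range (N + 1), (k ! : R) * (jacobi b u k * v k) =
        ∑ k ∈ range (N + 1), (k ! : R) * (u k * jacobi b v k) := by
      rw [← sub_eq_zero, ← sum_sub_distrib, ← green]
      simp only [mul_sub]
    rw [jacobiCoeff_succ, self_adjoint, ← jacobiCoeff_succ, ih (by omega),
      Nat.add_right_comm m 1 n, add_assoc]

theorem sum_factorial_mul_jacobiCoeff {m n N : ℕ} (h : m < N) :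
    ∑ k ∈ range N, (k ! : R) * (jacobiCoeff b m k * jacobiCoeff b n k) =
      jacobiCoeff b (m + n) 0 := by
  have vanish : ∀ k ≥ m + 1, (k ! : R) * (jacobiCoeff b m k * jacobiCoeff b n k) = 0 :=
    fun k hk => by rw [jacobiCoeff_eq_zero_of_lt b hk, zero_mul, mul_zero]
  rw [eventually_constant_sum vanish h,
    ← eventually_constant_sum vanish (by omega : m + 1 ≤ m + n + 1),
    sum_factorial_mul_jacobiCoeff_of_add_lt b (Nat.lt_succ_self _)]

theorem det_hankel_jacobiCoeff (n : ℕ) :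
    (Matrix.of fun i j : Fin (n + 1) => jacobiCoeff b (i + j) 0).det =
      ∏ i ∈ range (n + 1), (i ! : R) := by
  set L : Matrix (Fin (n + 1)) (Fin (n + 1)) R := .of fun i k => jacobiCoeff b i k
  have hankel_eq : (Matrix.of fun i j : Fin (n + 1) => jacobiCoeff b (i + j) 0) =
      L * Matrix.diagonal (fun k : Fin (n + 1) => ((k : ℕ)! : R)) * L.transpose := by
    ext i j
    rw [Matrix.of_apply, ← sum_factorial_mul_jacobiCoeff b i.isLt, ← Fin.sum_univ_eq_sum_range]
    simp only [L, Matrix.mul_apply (M := _ * _), Matrix.mul_diagonal, Matrix.transpose_apply,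
      Matrix.of_apply]
    exact sum_congr rfl fun k _ => by ring
  have det_L : L.det = 1 := by
    rw [Matrix.det_of_isLowerTriangular L fun i k (hik : i < k) =>
      jacobiCoeff_eq_zero_of_lt b hik]
    simp [L, jacobiCoeff_self]
  rw [hankel_eq, Matrix.det_mul, Matrix.det_mul, Matrix.det_transpose, det_L,
    Matrix.det_diagonal, one_mul, mul_one, Fin.prod_univ_eq_prod_range (fun i => (i ! : R))]

end Jacobi

theorem jacobi_choose (r j : ℕ) :
    jacobi (fun k => (k + 1 + r : ℤ)) (fun k => (j.choose k : ℤ)) =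
      (fun k => ((j + 1).choose k : ℤ)) + (j + r) • fun k => (j.choose k : ℤ) := by
  funext k
  rw [Pi.add_apply, Pi.smul_apply, nsmul_eq_mul]
  cases k with
  | zero =>
    simp only [jacobi_apply_zero, Nat.choose_zero_right, Nat.choose_one_right]
    push_cast
    ring
  | succ k =>
    have absorb : ((j + 1) * j.choose (k + 1) : ℤ) =
        (j.choose (k + 1) + j.choose (k + 2)) * (k + 2) := by
      exact_mod_cast Nat.choose_succ_succ j (k + 1) ▸ Nat.add_one_mul_choose_eq j (k + 1)
    rw [jacobi_apply_succ, Nat.choose_succ_succ j k]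
    push_cast
    linear_combination -absorb

theorem rBell_eq_jacobiCoeff (r n : ℕ) :
    (rBell r n : ℤ) = jacobiCoeff (fun k => (k + 1 + r : ℤ)) n 0 := by
  have expansion := sum_rS_nsmul_eq_iterate r
    (jacobi fun k => (k + 1 + r : ℤ)).toAddMonoidHom
    (fun j k => (j.choose k : ℤ)) (jacobi_choose r) n
  have choose_zero : (fun k => (Nat.choose 0 k : ℤ)) = Pi.single 0 1 := by
    funext k
    cases k <;> simp
  rw [choose_zero] at expansion
  rw [jacobiCoeff, ← LinearMap.toAddMonoidHom_coe, ← expansion, rBell, Finset.sum_apply]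
  simp

theorem rBell_hankel (n r : ℕ) :
    Matrix.det (Matrix.of fun i j : Fin (n + 1) => (rBell r ((i : ℕ) + (j : ℕ)) : ℤ)) =
      ∏ i ∈ Finset.range (n + 1), (i.factorial : ℤ) := by
  simp only [rBell_eq_jacobiCoeff]
  exact det_hankel_jacobiCoeff _ n
end

section
/- Log-concavity of the rows of r-Stirling numbers: S_r(n,k)^2 \ge S_r(n,k+1) S_r(n,k-1) for all r \le k \le n. -/
lemma rS_succ_succ (r n k : ℕ) :
    rS r (n + 1) (k + 1) = (k + 1 + r) * rS r n (k + 1) + rS r n k := rfl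

lemma rS_succ_zero (r n : ℕ) : rS r (n + 1) 0 = r * rS r n 0 := rfl

lemma rS_eq_zero (r : ℕ) : ∀ n k, n < k → rS r n k = 0
  | 0, k + 1, _ => rfl
  | n + 1, k + 1, h => by
    rw [rS_succ_succ, rS_eq_zero r n (k + 1) (by omega), rS_eq_zero r n k (by omega)]
    simp

lemma rS_diag (r : ℕ) : ∀ n, rS r n n = 1
  | 0 => rfl
  | n + 1 => by
    rw [rS_succ_succ, rS_eq_zero r n (n + 1) (by omega), rS_diag r n]
    simp

lemma rS_pos (r : ℕ) : ∀ n k, 1 ≤ k → k ≤ n → 0 < rS r n k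
  | 0, _, h1, h2 => by omega
  | _ + 1, 0, h1, _ => by omega
  | n + 1, k + 1, _, h => by
    rcases Nat.lt_or_ge (k + 1) (n + 1) with h' | h'
    · have hp := rS_pos r n (k + 1) (by omega) (by omega)
      have h1 : 0 < (k + 1 + r) * rS r n (k + 1) := Nat.mul_pos (by omega) hp
      rw [rS_succ_succ]; omega
    · have hk : k = n := by omega
      subst hk
      rw [rS_succ_succ, rS_diag r k]
      have := rS_eq_zero r k (k + 1) (by omega)
      omega

lemma rS_log_concave (r : ℕ) : ∀ n k, rS r n (k + 2) * rS r n k ≤ rS r n (k + 1) ^ 2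
  | 0, k => by rw [rS_eq_zero r 0 (k + 2) (by omega)]; simp
  | n + 1, k => by
    have cross : ∀ j, rS r n (j + 3) * rS r n j ≤ rS r n (j + 2) * rS r n (j + 1) := by
      intro j
      rcases Nat.lt_or_ge n (j + 2) with h | h
      · rw [rS_eq_zero r n (j + 3) (by omega)]; simp
      · have p1 : 0 < rS r n (j + 1) := rS_pos r n (j + 1) (by omega) (by omega)
        have p2 : 0 < rS r n (j + 2) := rS_pos r n (j + 2) (by omega) (by omega)
        have h1 := rS_log_concave r n (j + 1)
        have h2 := rS_log_concave r n j
        have hm : (rS r n (j + 3) * rS r n j) * (rS r n (j + 2) * rS r n (j + 1)) ≤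
            (rS r n (j + 2) * rS r n (j + 1)) * (rS r n (j + 2) * rS r n (j + 1)) := by
          have := Nat.mul_le_mul h1 h2
          nlinarith [this]
        exact Nat.le_of_mul_le_mul_right hm (Nat.mul_pos p2 p1)
    match k with
    | 0 =>
      have h1 := rS_log_concave r n 0
      have h2 : rS r (n + 1) (0 + 2) = (1 + 1 + r) * rS r n 2 + rS r n 1 := rfl
      have h3 : rS r (n + 1) (0 + 1) = (0 + 1 + r) * rS r n 1 + rS r n 0 := rfl
      rw [h2, h3, rS_succ_zero]
      nlinarith [h1, Nat.mul_le_mul_left (r * (1 + 1 + r)) h1]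
    | j + 1 =>
      have h1 := rS_log_concave r n (j + 1)
      have h2 := rS_log_concave r n j
      have h3 := cross j
      have e1 : rS r (n + 1) (j + 1 + 2) = (j + 2 + 1 + r) * rS r n (j + 3) + rS r n (j + 2) := rfl
      have e2 : rS r (n + 1) (j + 1 + 1) = (j + 1 + 1 + r) * rS r n (j + 2) + rS r n (j + 1) := rfl
      have e3 : rS r (n + 1) (j + 1) = (j + 1 + r) * rS r n (j + 1) + rS r n j := rfl
      rw [e1, e2, e3]
      nlinarith [h1, h2, h3,
        Nat.mul_le_mul_left ((j + 2 + r) * (j + 2 + r)) h1,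
        Nat.mul_le_mul_left (j + 3 + r) h3]

theorem rStirling_log_concave (n k r : ℕ) (hrk : r ≤ k) (hkn : k ≤ n) :
    rStirling r n (k + 1) * rStirling r n (k - 1) ≤ rStirling r n k ^ 2 := by
  rcases Nat.lt_or_ge r k with h | h
  · have h1 : rStirling r n (k + 1) = rS r (n - r) (k - r - 1 + 2) := by
      rw [rStirling, if_pos ⟨by omega, by omega⟩]; congr 1; omega
    have h2 : rStirling r n (k - 1) = rS r (n - r) (k - r - 1) := by
      rw [rStirling, if_pos ⟨by omega, by omega⟩]; congr 1; omega
    have h3 : rStirling r n k = rS r (n - r) (k - r - 1 + 1) := by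
      rw [rStirling, if_pos ⟨by omega, by omega⟩]; congr 1; omega
    rw [h1, h2, h3]
    exact rS_log_concave r (n - r) (k - r - 1)
  · have hk : r = k := le_antisymm hrk h
    subst hk
    rcases Nat.eq_zero_or_pos r with h0 | h0
    · subst h0
      have h2 : rStirling 0 n 0 = rS 0 n 0 := by
        rw [rStirling, if_pos ⟨by omega, by omega⟩]; simp
      match n with
      | 0 =>
        have : rStirling 0 0 (0 + 1) = rS 0 0 1 := by
          rw [rStirling, if_pos ⟨by omega, by omega⟩]
        simp [this, show rS 0 0 1 = 0 from rfl]
      | m + 1 =>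
        have : rS 0 (m + 1) 0 = 0 := by rw [rS_succ_zero]; simp
        simp [h2, this]
    · have h2 : rStirling r n (r - 1) = 0 := by
        rw [rStirling, if_neg (by omega)]
      simp [h2]
end
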